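/- Let Q : ℝⁿ → ℝ be continuous with Q(0) = 0, Q > 0 on S \ {0}, and suppose the descent condition max_{closedBall γᵢ ε} Q − min_{closedBall γ_{i−1} ε} Q ≤ −η(‖γ_{i−1}‖) holds along an infinite sequence of way-points (γᵢ) in a compact set S̄, for a class-𝒦 function η. Then ‖γᵢ‖ → 0: the way-point sequence converges to the origin. -/

import Mathlib

open Metric Set Filter Topology

/-!
The maxima `Mᵢ` of `Q` over the balls `closedBall γᵢ ε` are nonnegative, and the descent
condition gives `Mᵢ₊₁ + η ‖γᵢ‖ ≤ Mᵢ`. Telescoping makes `∑ η ‖γᵢ‖` summable, so `η ‖γᵢ‖ → 0 = η 0`,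
and a strictly monotone `η` can only do this if `‖γᵢ‖ → 0`.
-/

theorem tendsto_zero_of_bddBelow_of_succ_add_le {M a : ℕ → ℝ} (ha : ∀ i, 0 ≤ a i)
    (hM : BddBelow (range M)) (hstep : ∀ i, M (i + 1) + a i ≤ M i) :
    Tendsto a atTop (𝓝 0) := by
  obtain ⟨b, hb⟩ := hM
  have htelescope : ∀ N, ∑ i ∈ Finset.range N, a i ≤ M 0 - M N := by
    intro N
    induction N with
    | zero => simp
    | succ N ih => rw [Finset.sum_range_succ]; linarith [hstep N]
  exact (summable_of_sum_range_le (c := M 0 - b) ha fun N =>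
    (htelescope N).trans (by linarith [hb ⟨N, rfl⟩])).tendsto_atTop_zero

theorem StrictMono.tendsto_of_tendsto_comp {ι α β : Type*} [LinearOrder α] [TopologicalSpace α]
    [OrderTopology α] [LinearOrder β] [TopologicalSpace β] [OrderTopology β] {f : α → β}
    (hf : StrictMono f) {l : Filter ι} {x : ι → α} {a : α}
    (hfx : Tendsto (f ∘ x) l (𝓝 (f a))) : Tendsto x l (𝓝 a) := by
  rw [tendsto_order] at hfx ⊢
  exact ⟨fun b hb => (hfx.1 (f b) (hf hb)).mono fun i => hf.lt_iff_lt.mp,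
    fun b hb => (hfx.2 (f b) (hf hb)).mono fun i => hf.lt_iff_lt.mp⟩

theorem stmt_19_general (n : ℕ) (S : Set (EuclideanSpace ℝ (Fin n)))
    (Q : EuclideanSpace ℝ (Fin n) → ℝ) (hQcont : Continuous Q)
    (hQ0 : Q 0 = 0) (hQpos : ∀ q ∈ closure S, q ≠ 0 → 0 < Q q)
    (η : ℝ → ℝ) (hηmono : StrictMono η) (hη0 : η 0 = 0)
    (ε : ℝ) (hε : 0 < ε)
    (γ : ℕ → EuclideanSpace ℝ (Fin n))
    (hballs : ∀ i, closedBall (γ i) ε ⊆ closure S)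
    (hdescent : ∀ i : ℕ,
      sSup (Q '' closedBall (γ (i + 1)) ε) - sInf (Q '' closedBall (γ i) ε)
        ≤ -η ‖γ i‖) :
    Tendsto (fun i => ‖γ i‖) atTop (nhds 0) := by
  have hQnonneg : ∀ q ∈ closure S, 0 ≤ Q q := fun q hq => by
    rcases eq_or_ne q 0 with rfl | hq0
    exacts [hQ0.ge, (hQpos q hq hq0).le]
  have hcompact : ∀ i, IsCompact (Q '' closedBall (γ i) ε) := fun i =>
    (isCompact_closedBall _ _).image hQcont
  have hcenter : ∀ i, Q (γ i) ∈ Q '' closedBall (γ i) ε := fun i =>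
    mem_image_of_mem _ (mem_closedBall_self hε.le)
  have hmax_nonneg : ∀ i, 0 ≤ sSup (Q '' closedBall (γ i) ε) := fun i =>
    (hQnonneg _ (hballs i (mem_closedBall_self hε.le))).trans
      (le_csSup (hcompact i).bddAbove (hcenter i))
  have hmin_le_max : ∀ i, sInf (Q '' closedBall (γ i) ε) ≤ sSup (Q '' closedBall (γ i) ε) :=
    fun i => csInf_le_csSup ⟨_, hcenter i⟩ (hcompact i).bddBelow (hcompact i).bddAbove
  have hη_nonneg : ∀ i, 0 ≤ η ‖γ i‖ := fun i => hη0 ▸ hηmono.monotone (norm_nonneg _)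
  have hη_tendsto : Tendsto (fun i => η ‖γ i‖) atTop (𝓝 0) :=
    tendsto_zero_of_bddBelow_of_succ_add_le hη_nonneg ⟨0, forall_mem_range.2 hmax_nonneg⟩
      fun i => by linarith [hdescent i, hmin_le_max i]
  exact hηmono.tendsto_of_tendsto_comp (a := 0) (by rwa [hη0])

/-- Limiting version of the convergence proposition: under the way-point descent
condition along an infinite sequence of way-points in the compact closure of a
bounded open set `S ∋ 0`, with `Q` continuous and positive definite and `η`
class-𝒦, the way-points converge to the origin: `‖γᵢ‖ → 0`. -/
theorem stmt_19 (n : ℕ) (S : Set (EuclideanSpace ℝ (Fin n)))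
    (hSopen : IsOpen S) (hSbdd : Bornology.IsBounded S)
    (h0S : (0 : EuclideanSpace ℝ (Fin n)) ∈ S)
    (Q : EuclideanSpace ℝ (Fin n) → ℝ) (hQcont : Continuous Q)
    (hQ0 : Q 0 = 0) (hQpos : ∀ q ∈ closure S, q ≠ 0 → 0 < Q q)
    (η : ℝ → ℝ) (hηcont : Continuous η) (hηmono : StrictMono η) (hη0 : η 0 = 0)
    (ε : ℝ) (hε : 0 < ε)
    (γ : ℕ → EuclideanSpace ℝ (Fin n)) (hγS : ∀ i, γ i ∈ S)
    (hballs : ∀ i, closedBall (γ i) ε ⊆ closure S)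
    (hdescent : ∀ i : ℕ,
      sSup (Q '' closedBall (γ (i + 1)) ε) - sInf (Q '' closedBall (γ i) ε)
        ≤ -η ‖γ i‖) :
    Tendsto (fun i => ‖γ i‖) atTop (nhds 0) :=
  stmt_19_general n S Q hQcont hQ0 hQpos η hηmono hη0 ε hε γ hballs hdescent
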